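/- If G is a uniquely 3-list colorable graph, then e(G) ≥ 2·n(G). -/

import Mathlib

/-- A coloring `c` of the vertices is proper if adjacent vertices get different colors. -/
def IsProperColoring {V α : Type*} (G : SimpleGraph V) (c : V → α) : Prop :=
  ∀ ⦃u w⦄, G.Adj u w → c u ≠ c w

/-- `c` is an `L`-coloring of `G`: a proper coloring with `c v ∈ L v` for every vertex `v`. -/
def IsListColoring {V : Type*} (G : SimpleGraph V) (L : V → Finset ℕ) (c : V → ℕ) : Prop :=
  IsProperColoring G c ∧ ∀ v, c v ∈ L v

/-- `G` is uniquely `f`-list colorable: there is a list assignment giving each vertex `v`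
a list of exactly `f v` colors, from which `G` has exactly one list coloring. -/
def UniquelyFListColorable {V : Type*} (G : SimpleGraph V) (f : V → ℕ) : Prop :=
  ∃ L : V → Finset ℕ, (∀ v, (L v).card = f v) ∧ ∃! c, IsListColoring G L c

/-- `G` is uniquely `k`-list colorable. -/
def UniquelyKListColorable {V : Type*} (G : SimpleGraph V) (k : ℕ) : Prop :=
  UniquelyFListColorable G (fun _ => k)

/-- The m-number of `G`: the least `k` for which `G` is not uniquely `k`-list colorable. -/
noncomputable def mNumber {V : Type*} (G : SimpleGraph V) : ℕ :=
  sInf {k | ¬ UniquelyKListColorable G k}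

/-!
The Alon–Tarsi polynomial method. Let `Q = ∏_{uw ∈ E(G)} (x_u - x_w)`, of degree `e(G)`, and
for lists `L v` consider the functional `Λ(P) = ∑_{x ∈ ∏ L v} (∏_v w_v(x_v)) P(x)` with the
Lagrange nodal weights `w_v(a) = ∏_{b ∈ L v, b ≠ a} (a - b)⁻¹`. The one-variable sum
`∑_a w_v(a) a^j` is the coefficient of `X^(|L v| - 1)` in the interpolant of `X^j`, so it
vanishes for `j < |L v| - 1`; hence `Λ` kills every polynomial of total degree below
`∑_v (|L v| - 1)`. On the other hand `Q` vanishes exactly at the improper colorings, so if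
`c` is the unique `L`-coloring then `Λ(Q) = w(c) Q(c) ≠ 0`. Therefore
`e(G) ≥ ∑_v (|L v| - 1)`, which is `2 n(G)` for lists of size `3`.
-/

open Finset MvPolynomial Lagrange

section Interpolation

variable {F ι σ : Type*} [Field F] [DecidableEq ι] {v : ι → F}

theorem Lagrange.sum_nodalWeight_mul_pow_eq_zero {s : Finset ι} (hvs : Set.InjOn v s) {j : ℕ}
    (hj : j + 1 < #s) : ∑ i ∈ s, nodalWeight s v i * v i ^ j = 0 := by
  have hdeg : ((Polynomial.X : Polynomial F) ^ j).degree < #s := by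
    rw [Polynomial.degree_X_pow]
    exact_mod_cast (by omega : j < #s)
  have hcoeff := coeff_eq_sum hvs hdeg
  rw [Polynomial.coeff_X_pow, if_neg (by omega)] at hcoeff
  rw [hcoeff]
  refine sum_congr rfl fun i _ => ?_
  rw [nodalWeight, prod_inv_distrib, Polynomial.eval_pow, Polynomial.eval_X, div_eq_inv_mul]

variable [Fintype σ] [DecidableEq σ]

theorem Lagrange.sum_piFinset_prod_nodalWeight_mul_pow_eq_zero (hv : Function.Injective v)
    (S : σ → Finset ι) {d : σ → ℕ} {i₀ : σ} (hi₀ : d i₀ + 1 < #(S i₀)) :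
    ∑ x ∈ Fintype.piFinset S, ∏ i, nodalWeight (S i) v (x i) * v (x i) ^ d i = 0 := by
  rw [← prod_univ_sum S fun i a => nodalWeight (S i) v a * v a ^ d i]
  exact prod_eq_zero (mem_univ i₀) (sum_nodalWeight_mul_pow_eq_zero hv.injOn hi₀)

theorem MvPolynomial.sum_piFinset_prod_nodalWeight_mul_eval_eq_zero
    (hv : Function.Injective v) (S : σ → Finset ι) {P : MvPolynomial σ F}
    (hP : P.totalDegree < ∑ i, (#(S i) - 1)) :
    ∑ x ∈ Fintype.piFinset S, (∏ i, nodalWeight (S i) v (x i)) * eval (v ∘ x) P = 0 := by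
  simp_rw [eval_eq', mul_sum]
  rw [sum_comm]
  refine sum_eq_zero fun d hd => ?_
  obtain ⟨i₀, hi₀⟩ : ∃ i₀, d i₀ + 1 < #(S i₀) := by
    by_contra! hall
    have hsum : ∑ i, d i ≤ P.totalDegree := by
      simpa [Finsupp.sum_fintype] using le_totalDegree hd
    have : ∑ i, (#(S i) - 1) ≤ ∑ i, d i := sum_le_sum fun i _ => by have := hall i; omega
    omega
  calc ∑ x ∈ Fintype.piFinset S, (∏ i, nodalWeight (S i) v (x i)) *
          (coeff d P * ∏ i, (v ∘ x) i ^ d i)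
      = coeff d P *
          ∑ x ∈ Fintype.piFinset S, ∏ i, nodalWeight (S i) v (x i) * v (x i) ^ d i := by
        rw [mul_sum]
        refine sum_congr rfl fun x _ => ?_
        rw [prod_mul_distrib]
        simp only [Function.comp_apply]
        ring
    _ = 0 := by rw [sum_piFinset_prod_nodalWeight_mul_pow_eq_zero hv S hi₀, mul_zero]

end Interpolation

theorem isProperColoring_comp_iff {V α β : Type*} {G : SimpleGraph V} {f : α → β}
    (hf : Function.Injective f) {c : V → α} :
    IsProperColoring G (f ∘ c) ↔ IsProperColoring G c :=
  forall₂_congr fun _ _ => imp_congr_right fun _ => hf.ne_iff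

namespace SimpleGraph

variable {V : Type*} (G : SimpleGraph V) [Fintype G.edgeSet] (R : Type*) [CommRing R]

/-- Each edge `e` contributes `X u - X w` for the orientation `(u, w) = e.out`; the choice of
orientations only affects the sign. -/
noncomputable def graphPolynomial : MvPolynomial V R :=
  ∏ e ∈ G.edgeFinset, (X e.out.1 - X e.out.2)

theorem isHomogeneous_graphPolynomial : (G.graphPolynomial R).IsHomogeneous #G.edgeFinset := by
  rw [card_eq_sum_ones]
  exact IsHomogeneous.prod _ _ _ fun _ _ => (isHomogeneous_X R _).sub (isHomogeneous_X R _)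

variable {G R}

theorem eval_graphPolynomial_ne_zero_iff [IsDomain R] {x : V → R} :
    eval x (G.graphPolynomial R) ≠ 0 ↔ IsProperColoring G x := by
  simp only [graphPolynomial, map_prod, map_sub, eval_X, prod_ne_zero_iff, sub_ne_zero]
  constructor
  · intro h u w huw
    have hne := h s(u, w) (mem_edgeFinset.2 huw)
    have hout : s((s(u, w)).out.1, (s(u, w)).out.2) = s(u, w) := Quot.out_eq _
    rcases Sym2.eq_iff.1 hout with ⟨h₁, h₂⟩ | ⟨h₁, h₂⟩ <;> rw [h₁, h₂] at hne
    · exact hne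
    · exact hne.symm
  · intro hx e he
    have hout : s(e.out.1, e.out.2) = e := Quot.out_eq e
    exact hx (by rwa [← mem_edgeSet, hout, ← mem_edgeFinset])

end SimpleGraph

theorem UniquelyFListColorable.sum_sub_one_le_card_edgeFinset {V : Type*} [Fintype V]
    [DecidableEq V] {G : SimpleGraph V} [DecidableRel G.Adj] {f : V → ℕ}
    (h : UniquelyFListColorable G f) : ∑ v, (f v - 1) ≤ #G.edgeFinset := by
  obtain ⟨L, hL, c, hc, huniq⟩ := h
  by_contra! hlt
  have hcast : Function.Injective (Nat.cast : ℕ → ℚ) := Nat.cast_injective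
  let Λ : (V → ℕ) → ℚ := fun x =>
    (∏ v, nodalWeight (L v) Nat.cast (x v)) * eval (Nat.cast ∘ x) (G.graphPolynomial ℚ)
  have hdeg : (G.graphPolynomial ℚ).totalDegree < ∑ v, (#(L v) - 1) := by
    simpa only [hL] using (G.isHomogeneous_graphPolynomial ℚ).totalDegree_le.trans_lt hlt
  have hzero : ∑ x ∈ Fintype.piFinset L, Λ x = 0 :=
    sum_piFinset_prod_nodalWeight_mul_eval_eq_zero hcast L hdeg
  have hsingle : ∑ x ∈ Fintype.piFinset L, Λ x = Λ c := by
    refine sum_eq_single_of_mem c (Fintype.mem_piFinset.2 hc.2) fun x hx hxc => ?_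
    have hQx : eval (Nat.cast ∘ x) (G.graphPolynomial ℚ) = 0 := by
      rw [← not_ne_iff, SimpleGraph.eval_graphPolynomial_ne_zero_iff,
        isProperColoring_comp_iff hcast]
      exact fun hx_proper => hxc (huniq x ⟨hx_proper, Fintype.mem_piFinset.1 hx⟩)
    simp only [Λ, hQx, mul_zero]
  have hQc : eval (Nat.cast ∘ c) (G.graphPolynomial ℚ) ≠ 0 :=
    SimpleGraph.eval_graphPolynomial_ne_zero_iff.2 ((isProperColoring_comp_iff hcast).2 hc.1)
  have hc_ne : Λ c ≠ 0 :=
    mul_ne_zero (prod_ne_zero_iff.2 fun v _ => nodalWeight_ne_zero hcast.injOn (hc.2 v)) hQc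
  exact hc_ne (hsingle ▸ hzero)

/-- If `G` is uniquely `3`-list colorable, then `e(G) ≥ 2 n(G)`. -/
theorem edges_ge_of_U3LC
    {V : Type} [Fintype V] [DecidableEq V] (G : SimpleGraph V) [DecidableRel G.Adj]
    (h : UniquelyKListColorable G 3) :
    2 * Fintype.card V ≤ G.edgeFinset.card := by
  simpa [mul_comm] using h.sum_sub_one_le_card_edgeFinset
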